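/- Suppose u = u(t,x) is a C² function on (0,∞) × ℝ³. Then for all t > 0 and x ≠ 0 with r = |x|: ⟨t−r⟩ (|∂_{tt}u| + |∇∂_t u| + |∇² u|) ≲ |∂Γ^{≤1} u| + ⟨t+r⟩ |□u|, where ∂ ranges over (∂_t, ∂_1, ∂_2, ∂_3), Γ^{≤1} denotes all products of at most one vector field among ∂_t, ∂_i, Ω_{i0} = t∂_i + x_i∂_t, Ω_{ij} = x_i∂_j − x_j∂_i, and |∂Γ^{≤1}u| is the Euclidean norm of all first derivatives of all Γ^{≤1}u. -/

import Mathlib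

/-!
Write `a = ∂_t²u`, `b = ∇∂_t u`, `H = ∇²u` at a point with `t > 0`, `r = |x| > 0`. Each commutator
`[∂, Γ]` is a combination of the `∂`'s, so `G = |∂Γ^{≤1}u|` bounds `t b + a x` and `t H + x bᵀ`
(boosts) and `x_i H_{jk} - x_j H_{ik}` (rotations) by `3G`. Eliminating `b` and `H` through the
boosts in the identity `a - tr H = □u` gives `(t² - r²) a = t² □u + O((t + r) G)`, that is
`|t - r| |a| ≲ G + t |□u|`. If `r ≤ 2t`, the boosts carry this bound from `a` to `b` and from `b`
to `H`. If `r > 2t`, then `|t - r| ≈ r`, the rotations give `r |H| ≲ r |tr H| + G = r |a - □u| + G`,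
and the boosts give `r |b| ≲ t |H| + G`.
-/

open Real MeasureTheory

/-- Partial derivative in the `j`-th space-time coordinate (`0` = time, `1,2,3` = space). -/
noncomputable def pd (j : Fin 4) (U : (Fin 4 → ℝ) → ℝ) : (Fin 4 → ℝ) → ℝ :=
  fun z => fderiv ℝ U z (Pi.single j 1)

/-- Spatial Laplacian. -/
noncomputable def lap (U : (Fin 4 → ℝ) → ℝ) : (Fin 4 → ℝ) → ℝ :=
  fun z => ∑ i : Fin 3, pd i.succ (pd i.succ U) z

/-- The d'Alembertian `□ = ∂_tt − Δ`. -/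
noncomputable def box (U : (Fin 4 → ℝ) → ℝ) : (Fin 4 → ℝ) → ℝ :=
  fun z => pd 0 (pd 0 U) z - lap U z

/-- The spatial radius `r = |x|`. -/
noncomputable def rad (z : Fin 4 → ℝ) : ℝ := Real.sqrt (∑ i : Fin 3, (z i.succ)^2)

/-- Lorentz boost `Ω_{i0} = t∂_i + x_i ∂_t`. -/
noncomputable def boost (i : Fin 3) (U : (Fin 4 → ℝ) → ℝ) : (Fin 4 → ℝ) → ℝ :=
  fun z => z 0 * pd i.succ U z + z i.succ * pd 0 U z

/-- Rotation `Ω_{ij} = x_i∂_j − x_j∂_i`. -/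
noncomputable def rot (i j : Fin 3) (U : (Fin 4 → ℝ) → ℝ) : (Fin 4 → ℝ) → ℝ :=
  fun z => z i.succ * pd j.succ U z - z j.succ * pd i.succ U z

/-- Radial derivative `∂_r = (x/r)·∇`. -/
noncomputable def dr (U : (Fin 4 → ℝ) → ℝ) : (Fin 4 → ℝ) → ℝ :=
  fun z => ∑ i : Fin 3, (z i.succ / rad z) * pd i.succ U z

/-- Japanese bracket `⟨s⟩ = √(1+s²)`. -/
noncomputable def jb (s : ℝ) : ℝ := Real.sqrt (1 + s^2)

/-- The eleven operators `Γ^{≤1}`: identity, `∂_t`, `∂_i`, boosts, rotations. -/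
noncomputable def gam : Fin 11 → ((Fin 4 → ℝ) → ℝ) → ((Fin 4 → ℝ) → ℝ) :=
  ![id, pd 0, pd 1, pd 2, pd 3, boost 0, boost 1, boost 2, rot 0 1, rot 0 2, rot 1 2]

/-- `|∂Γ^{≤1}u|`: the ℓ² norm of all space-time first derivatives of all `Γ^{≤1}u`. -/
noncomputable def dGam (U : (Fin 4 → ℝ) → ℝ) (z : Fin 4 → ℝ) : ℝ :=
  Real.sqrt (∑ a : Fin 4, ∑ k : Fin 11, (pd a (gam k U) z)^2)

section Hessian

open Finset Fintype

variable {ι : Type*} [Fintype ι] {t r E F a ε : ℝ} {x b v : ι → ℝ} {H : ι → ι → ℝ}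

theorem abs_mul_le_mul_of_abs_le {c w C B : ℝ} (hc : |c| ≤ C) (hw : |w| ≤ B) :
    |c * w| ≤ C * B := by
  rw [abs_mul]
  exact mul_le_mul hc hw (abs_nonneg w) ((abs_nonneg c).trans hc)

theorem abs_le_of_sum_sq_eq (hx : ∑ i, x i ^ 2 = r ^ 2) (hr : 0 ≤ r) (i : ι) : |x i| ≤ r :=
  abs_le_of_sq_le_sq (hx ▸ single_le_sum (fun j _ => sq_nonneg (x j)) (mem_univ i)) hr

theorem abs_sum_le_card_mul (hv : ∀ i, |v i| ≤ ε) : |∑ i, v i| ≤ card ι * ε :=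
  (abs_sum_le_sum_abs _ _).trans ((sum_le_sum fun i _ => hv i).trans (by simp))

theorem abs_sum_mul_le (hx : ∑ i, x i ^ 2 = r ^ 2) (hr : 0 ≤ r) (hv : ∀ i, |v i| ≤ ε) :
    |∑ i, x i * v i| ≤ card ι * (r * ε) :=
  abs_sum_le_card_mul fun i => abs_mul_le_mul_of_abs_le (abs_le_of_sum_sq_eq hx hr i) (hv i)

theorem abs_sub_mul_abs_le_of_boost {c v w A : ℝ} (ht : 0 < t) (hr : 0 ≤ r) (hrt : r ≤ 2 * t)
    (hc : |c| ≤ r) (h : |t * v + c * w| ≤ E) (hw : |t - r| * |w| ≤ A) :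
    |t - r| * |v| ≤ 2 * A + E := by
  have htv : t * |v| ≤ r * |w| + E := by
    have h1 := abs_sub_abs_le_abs_sub (t * v) (-(c * w))
    rw [sub_neg_eq_add, abs_neg, abs_mul, abs_of_pos ht] at h1
    have h2 := abs_mul_le_mul_of_abs_le hc (le_refl |w|)
    linarith
  have hdist : |t - r| ≤ t := abs_le.mpr ⟨by linarith, by linarith⟩
  have hA : 0 ≤ A := (by positivity : 0 ≤ |t - r| * |w|).trans hw
  have hE : 0 ≤ E := (abs_nonneg _).trans h
  have key : t * (|t - r| * |v|) ≤ t * (2 * A + E) :=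
    calc t * (|t - r| * |v|) = |t - r| * (t * |v|) := by ring
      _ ≤ |t - r| * (r * |w| + E) := mul_le_mul_of_nonneg_left htv (abs_nonneg _)
      _ = r * (|t - r| * |w|) + |t - r| * E := by ring
      _ ≤ 2 * t * A + t * E := add_le_add
          (mul_le_mul hrt hw (by positivity) (by positivity)) (mul_le_mul_of_nonneg_right hdist hE)
      _ = t * (2 * A + E) := by ring
  exact le_of_mul_le_mul_left key ht

/-- The constraints that a bound `E` on `∂Γ^{≤1}u` puts on `(a, b, H) = (∂_t²u, ∇∂_t u, ∇²u)`
at `(t, x)`: up to first derivatives of `u`, the quantities bounded are `∂_t Ω_{i0}u`,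
`∂_j Ω_{i0}u` and `∂_k Ω_{ij}u`. -/
structure LorentzHessianBound (t : ℝ) (x : ι → ℝ) (a : ℝ) (b : ι → ℝ) (H : ι → ι → ℝ)
    (E : ℝ) : Prop where
  symm : ∀ i j, H i j = H j i
  boost_time : ∀ i, |t * b i + x i * a| ≤ E
  boost_space : ∀ i j, |t * H i j + x i * b j| ≤ E
  rot : ∀ i j k, |x i * H j k - x j * H i k| ≤ E

namespace LorentzHessianBound

theorem abs_sub_mul_abs_le_of_trace (hJ : LorentzHessianBound t x a b H E) (ht : 0 < t)
    (hr : 0 ≤ r) (hx : ∑ i, x i ^ 2 = r ^ 2) (htr : a - ∑ i, H i i = F) :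
    |t - r| * |a| ≤ t * |F| + card ι * E := by
  have hdiag : ∑ i, (t * H i i + x i * b i) = t * ∑ i, H i i + ∑ i, x i * b i := by
    rw [sum_add_distrib, mul_sum]
  have hrad : ∑ i, x i * (t * b i + x i * a) = t * ∑ i, x i * b i + (∑ i, x i ^ 2) * a := by
    rw [mul_sum, sum_mul, ← sum_add_distrib]
    exact sum_congr rfl fun i _ => by ring
  -- Boosts make `b ≈ -(a/t) x` and `H ≈ -(1/t) x bᵀ`, so `tr H ≈ (r/t)² a` and `□u ≈ (1 - r²/t²) a`.
  have key : (t + r) * ((t - r) * a) - t ^ 2 * F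
      = t * ∑ i, (t * H i i + x i * b i) - ∑ i, x i * (t * b i + x i * a) := by
    rw [hdiag, hrad, hx, ← htr]; ring
  have hbound : |(t + r) * ((t - r) * a) - t ^ 2 * F| ≤ (t + r) * (card ι * E) := by
    rw [key]
    refine (abs_sub _ _).trans ?_
    have h1 : |t * ∑ i, (t * H i i + x i * b i)| ≤ t * (card ι * E) :=
      abs_mul_le_mul_of_abs_le (abs_of_pos ht).le (abs_sum_le_card_mul fun i => hJ.boost_space i i)
    have h2 := abs_sum_mul_le hx hr hJ.boost_time
    linarith
  have hF : t ^ 2 * |F| ≤ (t + r) * (t * |F|) := by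
    nlinarith [mul_nonneg (mul_nonneg hr ht.le) (abs_nonneg F)]
  have hmain : (t + r) * (|t - r| * |a|) ≤ (t + r) * (t * |F| + card ι * E) := by
    have := abs_sub_abs_le_abs_sub ((t + r) * ((t - r) * a)) (t ^ 2 * F)
    rw [abs_mul, abs_mul, abs_mul, abs_of_pos (by linarith : 0 < t + r),
      abs_of_pos (by positivity : 0 < t ^ 2)] at this
    linarith
  exact le_of_mul_le_mul_left hmain (by linarith)

theorem mul_abs_le_mul_abs_trace (hJ : LorentzHessianBound t x a b H E) (hr : 0 < r)
    (hx : ∑ i, x i ^ 2 = r ^ 2) (j k : ι) :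
    r * |H j k| ≤ r * |∑ i, H i i| + (card ι + 2 * card ι ^ 2) * E := by
  set n : ℝ := card ι
  set v : ι → ℝ := fun k => ∑ i, x i * H i k
  set q := ∑ i, x i * v i
  set T := ∑ i, H i i
  -- Rotations make `H` radial in each index: `r² H ≈ x (Hx)ᵀ ≈ x xᵀ tr H`.
  have e1 (j k : ι) : |r ^ 2 * H j k - x j * v k| ≤ n * (r * E) := by
    have : r ^ 2 * H j k - x j * v k = ∑ i, x i * (x i * H j k - x j * H i k) := by
      rw [← hx, sum_mul, mul_sum, ← sum_sub_distrib]
      exact sum_congr rfl fun i _ => by ring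
    rw [this]
    exact abs_sum_mul_le hx hr.le fun i => hJ.rot i j k
  have e2 : |r ^ 2 * v k - x k * q| ≤ n * (r * (n * (r * E))) := by
    have hv : r ^ 2 * v k = ∑ i, x i * (r ^ 2 * H k i) := by
      simp only [v, mul_sum]
      exact sum_congr rfl fun i _ => by rw [hJ.symm k i]; ring
    have : r ^ 2 * v k - x k * q = ∑ i, x i * (r ^ 2 * H k i - x k * v i) := by
      rw [hv, mul_sum, ← sum_sub_distrib]
      exact sum_congr rfl fun i _ => by ring
    rw [this]
    exact abs_sum_mul_le hx hr.le fun i => e1 k i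
  have e3 : |r ^ 2 * T - q| ≤ n * (n * (r * E)) := by
    have : r ^ 2 * T - q = ∑ i, (r ^ 2 * H i i - x i * v i) := by
      simp only [T, q, mul_sum, ← sum_sub_distrib]
    rw [this]
    exact abs_sum_le_card_mul fun i => e1 i i
  have hxj := abs_le_of_sum_sq_eq hx hr.le j
  have hxk := abs_le_of_sum_sq_eq hx hr.le k
  have hxx : |x j * x k| ≤ r * r := abs_mul_le_mul_of_abs_le hxj hxk
  have hr2 : |r ^ 2| ≤ r ^ 2 := (abs_of_pos (by positivity)).le
  have hsplit : r ^ 4 * H j k = r ^ 2 * (r ^ 2 * H j k - x j * v k)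
      + x j * (r ^ 2 * v k - x k * q) - x j * x k * (r ^ 2 * T - q) + r ^ 2 * (x j * x k * T) := by
    ring
  have hbound : |r ^ 4 * H j k| ≤ r ^ 3 * (r * |T| + (n + 2 * n ^ 2) * E) := by
    have h1 := abs_le.mp (abs_mul_le_mul_of_abs_le hr2 (e1 j k))
    have h2 := abs_le.mp (abs_mul_le_mul_of_abs_le hxj e2)
    have h3 := abs_le.mp (abs_mul_le_mul_of_abs_le hxx e3)
    have h4 := abs_le.mp (abs_mul_le_mul_of_abs_le hr2 (abs_mul_le_mul_of_abs_le hxx (le_refl |T|)))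
    rw [hsplit, abs_le]
    constructor <;> nlinarith [h1.1, h1.2, h2.1, h2.2, h3.1, h3.2, h4.1, h4.2]
  rw [abs_mul, abs_of_pos (by positivity : 0 < r ^ 4)] at hbound
  exact le_of_mul_le_mul_left (by nlinarith : r ^ 3 * (r * |H j k|) ≤ _) (by positivity)

theorem mul_abs_le_of_boost_space (hJ : LorentzHessianBound t x a b H E) (ht : 0 ≤ t) (hr : 0 < r)
    (hx : ∑ i, x i ^ 2 = r ^ 2) {K : ℝ} (j : ι) (hH : ∀ i, t * |H i j| ≤ K) :
    r * |b j| ≤ card ι * (K + E) := by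
  have hsum : r ^ 2 * b j = ∑ i, x i * (x i * b j) := by
    rw [← hx, sum_mul]
    exact sum_congr rfl fun i _ => by ring
  have hterm (i : ι) : |x i * b j| ≤ K + E := by
    have h := abs_sub_abs_le_abs_sub (x i * b j) (-(t * H i j))
    rw [sub_neg_eq_add, abs_neg, abs_mul t, abs_of_nonneg ht, add_comm] at h
    linarith [hJ.boost_space i j, hH i]
  have h := abs_sum_mul_le hx hr.le hterm
  rw [← hsum, abs_mul, abs_of_pos (by positivity : 0 < r ^ 2)] at h
  exact le_of_mul_le_mul_left (by nlinarith : r * (r * |b j|) ≤ r * (card ι * (K + E))) hr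

theorem mul_abs_le_of_two_mul_lt (hJ : LorentzHessianBound t x a b H E) (ht : 0 < t)
    (hr : 0 < r) (hrt : 2 * t < r) (hx : ∑ i, x i ^ 2 = r ^ 2) (htr : a - ∑ i, H i i = F)
    (hE : 0 ≤ E) :
    (∀ i j, r * |H i j| ≤ (2 * card ι ^ 2 + 3 * card ι + 3) * (E + (t + r) * |F|))
      ∧ ∀ j, r * |b j| ≤ card ι * ((card ι ^ 2 + 3 / 2 * card ι + 5 / 2) * (E + (t + r) * |F|)) := by
  set n : ℝ := card ι with hn_def
  set M := E + (t + r) * |F|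
  have hn : 0 ≤ n := Nat.cast_nonneg _
  have hEM : E ≤ M := le_add_of_nonneg_right (by positivity)
  have hfar : r ≤ 2 * |t - r| := by rw [abs_of_neg (by linarith)]; linarith
  have hra : r * |a| ≤ 2 * (t * |F| + n * E) := by
    nlinarith [hJ.abs_sub_mul_abs_le_of_trace ht hr.le hx htr, abs_nonneg a]
  have hH (i j : ι) : r * |H i j| ≤ (2 * n ^ 2 + 3 * n + 3) * M := by
    have h := hJ.mul_abs_le_mul_abs_trace hr hx i j
    rw [← hn_def] at h
    have htrace : r * |∑ i, H i i| ≤ r * |a| + r * |F| := by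
      rw [show ∑ i, H i i = a - F by linarith, ← mul_add]
      exact mul_le_mul_of_nonneg_left (abs_sub a F) hr.le
    nlinarith [mul_le_mul_of_nonneg_left hEM (by positivity : 0 ≤ n + 2 * n ^ 2),
      mul_nonneg ht.le (abs_nonneg F), mul_nonneg hr.le (abs_nonneg F)]
  refine ⟨hH, fun j => ?_⟩
  have h := hJ.mul_abs_le_of_boost_space ht.le hr hx j (K := (n ^ 2 + 3 / 2 * n + 3 / 2) * M)
    fun i => by nlinarith [hH i j, abs_nonneg (H i j)]
  rw [← hn_def] at h
  nlinarith

theorem abs_sub_mul_le (hJ : LorentzHessianBound t x a b H E) (ht : 0 < t) (hr : 0 < r)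
    (hx : ∑ i, x i ^ 2 = r ^ 2) (htr : a - ∑ i, H i i = F) (hE : 0 ≤ E) :
    |t - r| * |a| ≤ (card ι + 2) ^ 3 * (E + (t + r) * |F|)
      ∧ (∀ i, |t - r| * |b i| ≤ (card ι + 2) ^ 3 * (E + (t + r) * |F|))
      ∧ ∀ i j, |t - r| * |H i j| ≤ (card ι + 2) ^ 3 * (E + (t + r) * |F|) := by
  set n : ℝ := card ι
  set M := E + (t + r) * |F|
  have hn : 0 ≤ n := Nat.cast_nonneg _
  have hn2 := pow_nonneg hn 2
  have hn3 := pow_nonneg hn 3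
  have hEM : E ≤ M := le_add_of_nonneg_right (by positivity)
  have hC {c w : ℝ} (hc : c ≤ (n + 2) ^ 3) (hw : |t - r| * |w| ≤ c * M) :
      |t - r| * |w| ≤ (n + 2) ^ 3 * M :=
    hw.trans (mul_le_mul_of_nonneg_right hc (hE.trans hEM))
  have ha : |t - r| * |a| ≤ (n + 1) * M := by
    nlinarith [hJ.abs_sub_mul_abs_le_of_trace ht hr.le hx htr, mul_le_mul_of_nonneg_left hEM hn,
      mul_nonneg hr.le (abs_nonneg F)]
  refine ⟨hC (by nlinarith) ha, ?_⟩
  rcases le_or_gt r (2 * t) with hrt | hrt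
  · have hb (i : ι) : |t - r| * |b i| ≤ (2 * n + 3) * M := by
      have h := abs_sub_mul_abs_le_of_boost ht hr.le hrt (abs_le_of_sum_sq_eq hx hr.le i)
        (hJ.boost_time i) ha
      linarith
    have hH (i j : ι) : |t - r| * |H i j| ≤ (4 * n + 7) * M := by
      have h := abs_sub_mul_abs_le_of_boost ht hr.le hrt (abs_le_of_sum_sq_eq hx hr.le i)
        (hJ.boost_space i j) (hb j)
      linarith
    exact ⟨fun i => hC (by nlinarith) (hb i), fun i j => hC (by nlinarith) (hH i j)⟩
  · obtain ⟨hH, hb⟩ := hJ.mul_abs_le_of_two_mul_lt ht hr hrt hx htr hE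
    have hweight (w : ℝ) : |t - r| * |w| ≤ r * |w| :=
      mul_le_mul_of_nonneg_right (abs_le.mpr ⟨by linarith, by linarith⟩) (abs_nonneg w)
    exact ⟨fun i => hC (by nlinarith) ((hweight _).trans ((hb i).trans_eq (mul_assoc _ _ _).symm)),
      fun i j => hC (by nlinarith) ((hweight _).trans (hH i j))⟩

end LorentzHessianBound

end Hessian

section Derivation

variable {U V : (Fin 4 → ℝ) → ℝ} {z : Fin 4 → ℝ}

theorem pd_add (hU : DifferentiableAt ℝ U z) (hV : DifferentiableAt ℝ V z) (a : Fin 4) :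
    pd a (fun y => U y + V y) z = pd a U z + pd a V z := by
  rw [pd, fderiv_fun_add hU hV]; rfl

theorem pd_sub (hU : DifferentiableAt ℝ U z) (hV : DifferentiableAt ℝ V z) (a : Fin 4) :
    pd a (fun y => U y - V y) z = pd a U z - pd a V z := by
  rw [pd, fderiv_fun_sub hU hV]; rfl

theorem pd_mul (hU : DifferentiableAt ℝ U z) (hV : DifferentiableAt ℝ V z) (a : Fin 4) :
    pd a (fun y => U y * V y) z = U z * pd a V z + V z * pd a U z := by
  rw [pd, fderiv_fun_mul hU hV]; rfl

theorem pd_coord (a j : Fin 4) : pd a (fun y => y j) z = (Pi.single a 1 : Fin 4 → ℝ) j := by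
  rw [pd, (hasFDerivAt_apply j z).fderiv]; rfl

theorem differentiableAt_fderiv (hU : ContDiffAt ℝ 2 U z) : DifferentiableAt ℝ (fderiv ℝ U) z :=
  (hU.fderiv_right (m := 1) (by norm_num)).differentiableAt (by norm_num)

theorem differentiableAt_pd (hU : ContDiffAt ℝ 2 U z) (b : Fin 4) :
    DifferentiableAt ℝ (pd b U) z :=
  (differentiableAt_fderiv hU).clm_apply (differentiableAt_const _)

theorem pd_pd_comm (hU : ContDiffAt ℝ 2 U z) (a b : Fin 4) :
    pd a (pd b U) z = pd b (pd a U) z := by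
  have hsnd : ∀ a b : Fin 4,
      pd a (pd b U) z = fderiv ℝ (fderiv ℝ U) z (Pi.single a 1) (Pi.single b 1) := by
    intro a b
    unfold pd
    rw [fderiv_clm_apply (differentiableAt_fderiv hU) (differentiableAt_const _)]
    simp
  rw [hsnd, hsnd]
  exact hU.isSymmSndFDerivAt (by simp) _ _

theorem pd_boost (hU : ContDiffAt ℝ 2 U z) (a : Fin 4) (i : Fin 3) :
    pd a (boost i U) z = z 0 * pd a (pd i.succ U) z + z i.succ * pd a (pd 0 U) z
      + ((Pi.single a 1 : Fin 4 → ℝ) 0 * pd i.succ U z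
        + (Pi.single a 1 : Fin 4 → ℝ) i.succ * pd 0 U z) := by
  have hc (j : Fin 4) : DifferentiableAt ℝ (fun y : Fin 4 → ℝ => y j) z :=
    differentiableAt_apply j z
  unfold boost
  rw [pd_add ((hc 0).fun_mul (differentiableAt_pd hU _)) ((hc _).fun_mul (differentiableAt_pd hU _)),
    pd_mul (hc 0) (differentiableAt_pd hU _), pd_mul (hc _) (differentiableAt_pd hU _),
    pd_coord, pd_coord]
  ring

theorem pd_rot (hU : ContDiffAt ℝ 2 U z) (a : Fin 4) (i j : Fin 3) :
    pd a (rot i j U) z = z i.succ * pd a (pd j.succ U) z - z j.succ * pd a (pd i.succ U) z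
      + ((Pi.single a 1 : Fin 4 → ℝ) i.succ * pd j.succ U z
        - (Pi.single a 1 : Fin 4 → ℝ) j.succ * pd i.succ U z) := by
  have hc (j : Fin 4) : DifferentiableAt ℝ (fun y : Fin 4 → ℝ => y j) z :=
    differentiableAt_apply j z
  unfold rot
  rw [pd_sub ((hc _).fun_mul (differentiableAt_pd hU _)) ((hc _).fun_mul (differentiableAt_pd hU _)),
    pd_mul (hc _) (differentiableAt_pd hU _), pd_mul (hc _) (differentiableAt_pd hU _),
    pd_coord, pd_coord]
  ring

end Derivation

section Commutators

variable {U : (Fin 4 → ℝ) → ℝ} {z : Fin 4 → ℝ}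

theorem abs_pd_gam_le_dGam (a : Fin 4) (k : Fin 11) :
    |pd a (gam k U) z| ≤ dGam U z := by
  rw [dGam, ← Real.sqrt_sq_eq_abs]
  refine Real.sqrt_le_sqrt ((Finset.single_le_sum (f := fun k => pd a (gam k U) z ^ 2)
    (fun _ _ => sq_nonneg _) (Finset.mem_univ k)).trans ?_)
  exact Finset.single_le_sum (f := fun a => ∑ k, pd a (gam k U) z ^ 2)
    (fun _ _ => Finset.sum_nonneg fun _ _ => sq_nonneg _) (Finset.mem_univ a)

theorem dGam_nonneg : 0 ≤ dGam U z :=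
  Real.sqrt_nonneg _

theorem abs_pd_le_dGam (a : Fin 4) : |pd a U z| ≤ dGam U z :=
  abs_pd_gam_le_dGam a 0

theorem abs_pd_pd_le_dGam (a b : Fin 4) : |pd a (pd b U) z| ≤ dGam U z := by
  fin_cases b
  exacts [abs_pd_gam_le_dGam a 1, abs_pd_gam_le_dGam a 2, abs_pd_gam_le_dGam a 3,
    abs_pd_gam_le_dGam a 4]

theorem abs_single_mul_le (a j : Fin 4) (v : ℝ) : |(Pi.single a 1 : Fin 4 → ℝ) j * v| ≤ |v| := by
  rw [abs_mul]
  refine mul_le_of_le_one_left (abs_nonneg v) ?_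
  rw [Pi.single_apply]
  split_ifs <;> simp

theorem abs_boost_hessian_le (hU : ContDiffAt ℝ 2 U z) (a : Fin 4) (i : Fin 3) :
    |z 0 * pd a (pd i.succ U) z + z i.succ * pd a (pd 0 U) z| ≤ 3 * dGam U z := by
  have hboost : |pd a (boost i U) z| ≤ dGam U z := by
    fin_cases i
    exacts [abs_pd_gam_le_dGam a 5, abs_pd_gam_le_dGam a 6, abs_pd_gam_le_dGam a 7]
  rw [show z 0 * pd a (pd i.succ U) z + z i.succ * pd a (pd 0 U) z
      = pd a (boost i U) z - (Pi.single a 1 : Fin 4 → ℝ) 0 * pd i.succ U z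
        - (Pi.single a 1 : Fin 4 → ℝ) i.succ * pd 0 U z by rw [pd_boost hU a i]; ring]
  have h1 := (abs_single_mul_le a 0 (pd i.succ U z)).trans (abs_pd_le_dGam i.succ)
  have h2 := (abs_single_mul_le a i.succ (pd 0 U z)).trans (abs_pd_le_dGam 0)
  linarith [abs_sub (pd a (boost i U) z - (Pi.single a 1 : Fin 4 → ℝ) 0 * pd i.succ U z)
    ((Pi.single a 1 : Fin 4 → ℝ) i.succ * pd 0 U z),
    abs_sub (pd a (boost i U) z) ((Pi.single a 1 : Fin 4 → ℝ) 0 * pd i.succ U z)]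

theorem abs_pd_rot_le_dGam {i j : Fin 3} (hij : i < j) (a : Fin 4) :
    |pd a (rot i j U) z| ≤ dGam U z := by
  fin_cases i <;> fin_cases j <;> first
    | exact absurd hij (by decide)
    | exact abs_pd_gam_le_dGam a 8
    | exact abs_pd_gam_le_dGam a 9
    | exact abs_pd_gam_le_dGam a 10

theorem abs_rot_hessian_le_of_lt (hU : ContDiffAt ℝ 2 U z) (a : Fin 4) {i j : Fin 3} (hij : i < j) :
    |z i.succ * pd a (pd j.succ U) z - z j.succ * pd a (pd i.succ U) z| ≤ 3 * dGam U z := by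
  rw [show z i.succ * pd a (pd j.succ U) z - z j.succ * pd a (pd i.succ U) z
      = pd a (rot i j U) z - (Pi.single a 1 : Fin 4 → ℝ) i.succ * pd j.succ U z
        + (Pi.single a 1 : Fin 4 → ℝ) j.succ * pd i.succ U z by rw [pd_rot hU a i j]; ring]
  have h1 := (abs_single_mul_le a i.succ (pd j.succ U z)).trans (abs_pd_le_dGam j.succ)
  have h2 := (abs_single_mul_le a j.succ (pd i.succ U z)).trans (abs_pd_le_dGam i.succ)
  linarith [abs_pd_rot_le_dGam (U := U) (z := z) hij a,
    abs_add_le (pd a (rot i j U) z - (Pi.single a 1 : Fin 4 → ℝ) i.succ * pd j.succ U z)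
      ((Pi.single a 1 : Fin 4 → ℝ) j.succ * pd i.succ U z),
    abs_sub (pd a (rot i j U) z) ((Pi.single a 1 : Fin 4 → ℝ) i.succ * pd j.succ U z)]

theorem abs_rot_hessian_le (hU : ContDiffAt ℝ 2 U z) (a : Fin 4) (i j : Fin 3) :
    |z i.succ * pd a (pd j.succ U) z - z j.succ * pd a (pd i.succ U) z| ≤ 3 * dGam U z := by
  rcases lt_trichotomy i j with hij | rfl | hji
  · exact abs_rot_hessian_le_of_lt hU a hij
  · simpa using dGam_nonneg (U := U) (z := z)
  · rw [abs_sub_comm]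
    exact abs_rot_hessian_le_of_lt hU a hji

end Commutators

theorem lorentzHessianBound_of_contDiffAt {U : (Fin 4 → ℝ) → ℝ} {z : Fin 4 → ℝ} (hU : ContDiffAt ℝ 2 U z) :
    LorentzHessianBound (z 0) (fun i : Fin 3 => z i.succ) (pd 0 (pd 0 U) z)
      (fun i => pd i.succ (pd 0 U) z) (fun i j => pd i.succ (pd j.succ U) z) (3 * dGam U z) where
  symm _ _ := pd_pd_comm hU _ _
  boost_time i := by
    rw [pd_pd_comm hU i.succ 0]
    exact abs_boost_hessian_le hU 0 i
  boost_space i j := by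
    rw [pd_pd_comm hU i.succ j.succ]
    exact abs_boost_hessian_le hU j.succ i
  rot i j k := by
    rw [pd_pd_comm hU i.succ k.succ, pd_pd_comm hU j.succ k.succ]
    exact abs_rot_hessian_le hU k.succ i j

theorem jb_le_one_add_abs (s : ℝ) : jb s ≤ 1 + |s| := by
  rw [jb, Real.sqrt_le_left (by positivity)]
  nlinarith [sq_abs s, abs_nonneg s]

theorem le_jb (s : ℝ) : s ≤ jb s :=
  (le_abs_self s).trans (by rw [jb, ← Real.sqrt_sq_eq_abs]; exact Real.sqrt_le_sqrt (by linarith))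

theorem jb_mul_abs_le {s w G K : ℝ} (hw : |w| ≤ G) (h : |s| * |w| ≤ K) : jb s * |w| ≤ G + K := by
  nlinarith [mul_le_mul_of_nonneg_right (jb_le_one_add_abs s) (abs_nonneg w)]

section Assembly

open Finset Fintype

variable {κ ι : Type*} [Fintype κ] [Fintype ι] {c K : ℝ}

theorem mul_sqrt_sum_sq_le {f : κ → ℝ} (hc : 0 ≤ c) (hf : ∀ k, c * |f k| ≤ K) :
    c * √(∑ k, f k ^ 2) ≤ card κ * K := by
  have hsqrt : √(∑ k, f k ^ 2) ≤ ∑ k, |f k| := by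
    refine Real.sqrt_le_iff.mpr ⟨sum_nonneg fun k _ => abs_nonneg _, ?_⟩
    simpa only [sq_abs] using sum_sq_le_sq_sum_of_nonneg fun k _ => abs_nonneg (f k)
  calc c * √(∑ k, f k ^ 2) ≤ ∑ k, c * |f k| := by
        rw [← mul_sum]; exact mul_le_mul_of_nonneg_left hsqrt hc
    _ ≤ card κ * K := (sum_le_sum fun k _ => hf k).trans (by simp)

theorem mul_add_sqrt_sum_sq_le {a : ℝ} {b : ι → ℝ} {H : ι → ι → ℝ} (hc : 0 ≤ c)
    (ha : c * |a| ≤ K) (hb : ∀ i, c * |b i| ≤ K) (hH : ∀ i j, c * |H i j| ≤ K) :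
    c * (|a| + √(∑ i, b i ^ 2) + √(∑ i, ∑ j, H i j ^ 2)) ≤ (1 + card ι + card ι ^ 2) * K := by
  have hbsum := mul_sqrt_sum_sq_le hc hb
  have hHsum := mul_sqrt_sum_sq_le (f := fun p : ι × ι => H p.1 p.2) hc fun p => hH p.1 p.2
  rw [sum_prod_type, card_prod] at hHsum
  push_cast at hHsum
  linarith

end Assembly

/-- **Second-derivative decay estimate.** For `u` of class `C²` on `(0,∞) × ℝ³`,
`t > 0`, `x ≠ 0`:
`⟨t−r⟩ (|∂_tt u| + |∇∂_t u| + |∇²u|) ≲ |∂Γ^{≤1}u| + ⟨t+r⟩|□u|`, absolute constant. -/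
theorem second_derivative_decay :
    ∃ C > 0, ∀ U : (Fin 4 → ℝ) → ℝ,
      ContDiffOn ℝ 2 U {z : Fin 4 → ℝ | 0 < z 0} →
      ∀ z : Fin 4 → ℝ, 0 < z 0 → rad z ≠ 0 →
        jb (z 0 - rad z) *
            (|pd 0 (pd 0 U) z|
              + Real.sqrt (∑ i : Fin 3, (pd i.succ (pd 0 U) z)^2)
              + Real.sqrt (∑ i : Fin 3, ∑ j : Fin 3, (pd i.succ (pd j.succ U) z)^2))
          ≤ C * (dGam U z + jb (z 0 + rad z) * |box U z|) := by
  refine ⟨3 * 13 * 126, by norm_num, fun U hU z ht hr0 => ?_⟩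
  have hUz : ContDiffAt ℝ 2 U z :=
    (hU z ht).contDiffAt ((isOpen_lt continuous_const (continuous_apply 0)).mem_nhds ht)
  have hr : 0 < rad z := (Real.sqrt_nonneg _).lt_of_ne' hr0
  have hx : ∑ i : Fin 3, z i.succ ^ 2 = rad z ^ 2 := (Real.sq_sqrt (by positivity)).symm
  have htr : pd 0 (pd 0 U) z - ∑ i : Fin 3, pd i.succ (pd i.succ U) z = box U z := rfl
  have hG : 0 ≤ dGam U z := dGam_nonneg
  obtain ⟨ha, hb, hH⟩ :=
    (lorentzHessianBound_of_contDiffAt hUz).abs_sub_mul_le ht hr hx htr (by positivity)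
  set M := 3 * dGam U z + (z 0 + rad z) * |box U z| with hM
  have hentry {w : ℝ} (hw : |w| ≤ dGam U z)
      (h : |z 0 - rad z| * |w| ≤ (Fintype.card (Fin 3) + 2) ^ 3 * M) :
      jb (z 0 - rad z) * |w| ≤ 126 * M := by
    norm_num at h
    nlinarith [jb_mul_abs_le hw h, abs_nonneg (box U z)]
  have hsum := mul_add_sqrt_sum_sq_le (c := jb (z 0 - rad z)) (Real.sqrt_nonneg _)
    (hentry (abs_pd_pd_le_dGam _ _) ha) (fun i => hentry (abs_pd_pd_le_dGam _ _) (hb i))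
    fun i j => hentry (abs_pd_pd_le_dGam _ _) (hH i j)
  norm_num at hsum
  refine hsum.trans ?_
  have hF : 0 ≤ (z 0 + rad z) * |box U z| := by positivity
  linarith [mul_le_mul_of_nonneg_right (le_jb (z 0 + rad z)) (abs_nonneg (box U z))]
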